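/- Conversely, for any r-dimensional affine subspace L of ℝ^n, Σ_{k=1}^p dist(X_k, L)² ≥ Σ_{i=r+1}^n λ_i; hence the subspace spanned by the top r eigenvectors (shifted by the mean) minimizes the sum of squared distances among all r-dimensional affine subspaces. -/

import Mathlib

/-!
For a vector `u`, the eigen-equations give `∑ₖ ⟪Xₖ - X̄, u⟫² = ∑ᵢ λᵢ ⟪vᵢ, u⟫²`. If `L` has
dimension `r`, take an orthonormal basis `u₁, …, u_{n-r}` of `Lᗮ`: the squared distance from `Xₖ`
to `a + L` is at least `∑ⱼ ⟪uⱼ, Xₖ - a⟫²`, and moving `a` to the mean only lowers the sum over `k`.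
This leaves `∑ᵢ λᵢ tᵢ` with weights `tᵢ = ∑ⱼ ⟪vᵢ, uⱼ⟫² ∈ [0, 1]` of total mass `n - r`, which is
at least the sum of the `n - r` smallest eigenvalues. The principal subspace attains the bound:
the residual of `Xₖ - X̄` off `v₁, …, v_r` is `∑_{i ≥ r} ⟪vᵢ, Xₖ - X̄⟫ vᵢ`.
-/

open Pointwise

open Finset Metric Submodule
open scoped RealInnerProductSpace

theorem sum_le_sum_mul_of_threshold {ι : Type*} [Fintype ι] (s : Finset ι) (lam t : ι → ℝ) (c : ℝ)
    (hs : ∀ i ∈ s, lam i ≤ c) (hsc : ∀ i ∉ s, c ≤ lam i) (ht0 : ∀ i, 0 ≤ t i)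
    (ht1 : ∀ i, t i ≤ 1) (hsum : ∑ i, t i = #s) :
    ∑ i ∈ s, lam i ≤ ∑ i, lam i * t i := by
  classical
  -- Termwise, `lam i - c` and `t i - 1_s i` have the same sign.
  have hdiff : ∑ i, lam i * t i - ∑ i ∈ s, lam i =
      ∑ i, (lam i - c) * (t i - if i ∈ s then 1 else 0) := by
    simp only [mul_sub, sub_mul, sum_sub_distrib, ← mul_sum, hsum, mul_ite, mul_one, mul_zero,
      sum_ite_mem, univ_inter, sum_const, nsmul_eq_mul]
    ring
  have hterm : ∀ i, 0 ≤ (lam i - c) * (t i - if i ∈ s then 1 else 0) := fun i => by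
    split_ifs with hi
    · exact mul_nonneg_of_nonpos_of_nonpos (by linarith [hs i hi]) (by linarith [ht1 i])
    · exact mul_nonneg (by linarith [hsc i hi]) (by linarith [ht0 i])
  linarith [sum_nonneg fun i (_ : i ∈ univ) => hterm i]

theorem exists_threshold_of_antitone {n : ℕ} {f : Fin n → ℝ} (hf : Antitone f) (r : ℕ) :
    ∃ c, (∀ i : Fin n, r ≤ (i : ℕ) → f i ≤ c) ∧ ∀ i : Fin n, (i : ℕ) < r → c ≤ f i := by
  rcases lt_or_ge r n with hrn | hnr
  · exact ⟨f ⟨r, hrn⟩, fun i hi => hf (Fin.le_def.2 hi), fun i hi => hf (Fin.le_def.2 hi.le)⟩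
  · exact ⟨⨅ i, f i, fun i hi => absurd i.isLt (by omega),
      fun i _ => ciInf_le (Set.finite_range f).bddBelow i⟩

theorem Fin.card_filter_le_val {n : ℕ} (r : ℕ) : #{i : Fin n | r ≤ (i : ℕ)} = n - r := by
  have := Fin.card_filter_val_lt (n := n) (m := r)
  have := card_filter_add_card_filter_not (s := (univ : Finset (Fin n))) (fun i => (i : ℕ) < r)
  simp only [not_lt, card_univ, Fintype.card_fin] at this
  omega

theorem sum_sub_inv_card_smul_sum {K V κ : Type*} [Field K] [CharZero K] [AddCommGroup V]
    [Module K V] [Fintype κ] (x : κ → V) :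
    ∑ k, (x k - (Fintype.card κ : K)⁻¹ • ∑ j, x j) = 0 := by
  rcases isEmpty_or_nonempty κ with hκ | hκ
  · simp
  · rw [sum_sub_distrib, sum_const, card_univ, ← Nat.cast_smul_eq_nsmul K, smul_smul,
      mul_inv_cancel₀ (by simp [Fintype.card_ne_zero]), one_smul, sub_self]

theorem sum_sq_le_sum_add_sq {κ : Type*} [Fintype κ] (y : κ → ℝ) (hy : ∑ k, y k = 0) (c : ℝ) :
    ∑ k, y k ^ 2 ≤ ∑ k, (y k + c) ^ 2 := by
  have : ∑ k, (y k + c) ^ 2 = ∑ k, y k ^ 2 + Fintype.card κ * c ^ 2 := by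
    simp only [add_sq, sum_add_distrib, ← sum_mul, ← mul_sum, hy, sum_const, card_univ,
      nsmul_eq_mul]
    ring
  rw [this]
  exact le_add_of_nonneg_right (by positivity)

section InnerProductSpace

variable {E ι κ : Type*} [NormedAddCommGroup E] [InnerProductSpace ℝ E] [Fintype ι] [Fintype κ]

theorem sum_inner_sq_le_infDist_sq {u : κ → E} (hu : Orthonormal ℝ u) {K : Submodule ℝ E}
    (huK : ∀ j, u j ∈ Kᗮ) (x a : E) :
    ∑ j, ⟪u j, x - a⟫ ^ 2 ≤ infDist x (a +ᵥ (K : Set E)) ^ 2 := by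
  have hne : (a +ᵥ (K : Set E)).Nonempty := (K : Set E).nonempty_of_mem K.zero_mem |>.vadd_set
  have hsqrt : √(∑ j, ⟪u j, x - a⟫ ^ 2) ≤ infDist x (a +ᵥ (K : Set E)) := by
    refine (le_infDist hne).2 ?_
    rintro _ ⟨l, hl, rfl⟩
    have hshift : ∀ j, ⟪u j, x - (a + l)⟫ = ⟪u j, x - a⟫ := fun j => by
      rw [sub_add_eq_sub_sub, inner_sub_right, inner_left_of_mem_orthogonal hl (huK j), sub_zero]
    refine Real.sqrt_le_iff.2 ⟨dist_nonneg, ?_⟩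
    simpa [hshift, dist_eq_norm] using hu.sum_inner_products_le (x - (a + l)) (s := univ)
  calc ∑ j, ⟪u j, x - a⟫ ^ 2 = √(∑ j, ⟪u j, x - a⟫ ^ 2) ^ 2 := (Real.sq_sqrt (by positivity)).symm
    _ ≤ _ := pow_le_pow_left₀ (Real.sqrt_nonneg _) hsqrt 2

theorem infDist_sq_le_sum_inner_sq (b : OrthonormalBasis ι ℝ E) (s : Finset ι) {T : Set ι}
    (hT : ∀ i ∉ s, i ∈ T) (x a : E) :
    infDist x (a +ᵥ (span ℝ (b '' T) : Set E)) ^ 2 ≤ ∑ i ∈ s, ⟪b i, x - a⟫ ^ 2 := by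
  classical
  set y := ∑ i ∈ sᶜ, ⟪b i, x - a⟫ • b i
  have hy : y ∈ span ℝ (b '' T) :=
    sum_mem fun i hi => smul_mem _ _ (subset_span ⟨i, hT i (mem_compl.1 hi), rfl⟩)
  have hxy : x - (a + y) = ∑ i ∈ s, ⟪b i, x - a⟫ • b i := by
    rw [sub_add_eq_sub_sub, sub_eq_iff_eq_add, sum_add_sum_compl, b.sum_repr']
  calc infDist x (a +ᵥ (span ℝ (b '' T) : Set E)) ^ 2 ≤ dist x (a + y) ^ 2 :=
        pow_le_pow_left₀ infDist_nonneg (infDist_le_dist_of_mem (Set.vadd_mem_vadd_set hy)) 2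
    _ = ∑ i ∈ s, ⟪b i, x - a⟫ ^ 2 := by
        rw [dist_eq_norm, hxy, ← real_inner_self_eq_norm_sq, b.orthonormal.inner_sum]
        simp [sq]

theorem sum_sum_inner_sq_le_sum_infDist_sq {κ' : Type*} [Fintype κ'] {u : κ' → E}
    (hu : Orthonormal ℝ u) {K : Submodule ℝ E} (huK : ∀ j, u j ∈ Kᗮ) (x : κ → E) (m : E)
    (hm : ∑ k, (x k - m) = 0) (a : E) :
    ∑ j, ∑ k, ⟪x k - m, u j⟫ ^ 2 ≤ ∑ k, infDist (x k) (a +ᵥ (K : Set E)) ^ 2 :=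
  calc ∑ j, ∑ k, ⟪x k - m, u j⟫ ^ 2 ≤ ∑ j, ∑ k, ⟪u j, x k - a⟫ ^ 2 := sum_le_sum fun j _ => by
        have hcentred : ∑ k, ⟪x k - m, u j⟫ = 0 := by rw [← sum_inner, hm, inner_zero_left]
        simpa [real_inner_comm, ← inner_add_right] using
          sum_sq_le_sum_add_sq _ hcentred ⟪m - a, u j⟫
    _ = ∑ k, ∑ j, ⟪u j, x k - a⟫ ^ 2 := sum_comm
    _ ≤ _ := sum_le_sum fun k _ => sum_inner_sq_le_infDist_sq hu huK (x k) a

theorem sum_inner_sq_eq_sum_mul_inner_sq (b : OrthonormalBasis ι ℝ E) (y : κ → E) (lam : ι → ℝ)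
    (hW : ∀ i u, ∑ k, ⟪y k, b i⟫ * ⟪y k, u⟫ = lam i * ⟪b i, u⟫) (u : E) :
    ∑ k, ⟪y k, u⟫ ^ 2 = ∑ i, lam i * ⟪b i, u⟫ ^ 2 :=
  calc ∑ k, ⟪y k, u⟫ ^ 2 = ∑ k, ⟪y k, u⟫ * ∑ i, ⟪y k, b i⟫ * ⟪b i, u⟫ := by
        simp_rw [b.sum_inner_mul_inner, sq]
    _ = ∑ i, ⟪b i, u⟫ * ∑ k, ⟪y k, b i⟫ * ⟪y k, u⟫ := by
        simp_rw [mul_sum]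
        rw [sum_comm]
        exact sum_congr rfl fun _ _ => sum_congr rfl fun _ _ => by ring
    _ = ∑ i, lam i * ⟪b i, u⟫ ^ 2 := by
        simp_rw [hW]
        exact sum_congr rfl fun _ _ => by ring

theorem sum_le_sum_sum_mul_inner_sq (b : OrthonormalBasis ι ℝ E) {u : κ → E}
    (hu : Orthonormal ℝ u) (lam : ι → ℝ) (s : Finset ι) (c : ℝ) (hs : ∀ i ∈ s, lam i ≤ c)
    (hsc : ∀ i ∉ s, c ≤ lam i) (hcard : Fintype.card κ = #s) :
    ∑ i ∈ s, lam i ≤ ∑ j, ∑ i, lam i * ⟪b i, u j⟫ ^ 2 := by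
  have ht1 : ∀ i, ∑ j, ⟪b i, u j⟫ ^ 2 ≤ 1 := fun i => by
    simpa [real_inner_comm, b.orthonormal.1 i] using hu.sum_inner_products_le (b i) (s := univ)
  have hsum : ∑ i, ∑ j, ⟪b i, u j⟫ ^ 2 = #s := by
    rw [sum_comm]
    simp [b.sum_sq_inner_right, hu.1, hcard]
  calc ∑ i ∈ s, lam i ≤ ∑ i, lam i * ∑ j, ⟪b i, u j⟫ ^ 2 :=
        sum_le_sum_mul_of_threshold s lam _ c hs hsc (fun _ => by positivity) ht1 hsum
    _ = ∑ j, ∑ i, lam i * ⟪b i, u j⟫ ^ 2 := by simp_rw [mul_sum]; exact sum_comm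

theorem sum_le_sum_infDist_sq [FiniteDimensional ℝ E] (b : OrthonormalBasis ι ℝ E) (x : κ → E)
    (m : E) (hm : ∑ k, (x k - m) = 0) (lam : ι → ℝ)
    (hW : ∀ i u, ∑ k, ⟪x k - m, b i⟫ * ⟪x k - m, u⟫ = lam i * ⟪b i, u⟫) (s : Finset ι) (c : ℝ)
    (hs : ∀ i ∈ s, lam i ≤ c) (hsc : ∀ i ∉ s, c ≤ lam i) (K : Submodule ℝ E)
    (hK : Module.finrank ℝ Kᗮ = #s) (a : E) :
    ∑ i ∈ s, lam i ≤ ∑ k, infDist (x k) (a +ᵥ (K : Set E)) ^ 2 := by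
  let u := stdOrthonormalBasis ℝ Kᗮ
  have hu : Orthonormal ℝ (fun j => (u j : E)) := u.orthonormal.comp_linearIsometry Kᗮ.subtypeₗᵢ
  calc ∑ i ∈ s, lam i ≤ ∑ j, ∑ i, lam i * ⟪b i, u j⟫ ^ 2 :=
        sum_le_sum_sum_mul_inner_sq b hu lam s c hs hsc (by simpa using hK)
    _ = ∑ j, ∑ k, ⟪x k - m, u j⟫ ^ 2 := by
        simp_rw [sum_inner_sq_eq_sum_mul_inner_sq b _ lam hW]
    _ ≤ _ := sum_sum_inner_sq_le_sum_infDist_sq hu (fun j => (u j).2) x m hm a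

theorem sum_infDist_sq_le_sum (b : OrthonormalBasis ι ℝ E) (x : κ → E) (m : E) (lam : ι → ℝ)
    (hW : ∀ i u, ∑ k, ⟪x k - m, b i⟫ * ⟪x k - m, u⟫ = lam i * ⟪b i, u⟫) (s : Finset ι)
    {T : Set ι} (hT : ∀ i ∉ s, i ∈ T) :
    ∑ k, infDist (x k) (m +ᵥ (span ℝ (b '' T) : Set E)) ^ 2 ≤ ∑ i ∈ s, lam i :=
  calc _ ≤ ∑ k, ∑ i ∈ s, ⟪b i, x k - m⟫ ^ 2 :=
        sum_le_sum fun k _ => infDist_sq_le_sum_inner_sq b s hT (x k) m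
    _ = ∑ i ∈ s, lam i := by
        rw [sum_comm]
        refine sum_congr rfl fun i _ => ?_
        simpa [sq, real_inner_comm, b.orthonormal.1 i] using hW i (b i)

end InnerProductSpace

theorem sum_inner_mul_inner_of_sum_mul_eq {ι κ : Type*} [Fintype ι] [Fintype κ]
    (y : κ → EuclideanSpace ℝ ι) (w : EuclideanSpace ℝ ι) (μ : ℝ)
    (h : ∀ j, ∑ l, (∑ k, y k j * y k l) * w l = μ * w j) (u : EuclideanSpace ℝ ι) :
    ∑ k, ⟪y k, w⟫ * ⟪y k, u⟫ = μ * ⟪w, u⟫ := by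
  have heigen : ∑ k, ⟪y k, w⟫ • y k = μ • w := by
    ext j
    simp only [WithLp.ofLp_sum, WithLp.ofLp_smul, Finset.sum_apply, Pi.smul_apply,
      smul_eq_mul, PiLp.inner_apply, RCLike.inner_apply, conj_trivial, ← h j, sum_mul]
    rw [sum_comm]
    exact sum_congr rfl fun _ _ => sum_congr rfl fun _ _ => by ring
  simp_rw [← real_inner_smul_left, ← sum_inner, heigen]

theorem principal_subspace_minimizes_sum_sq_dist_general (p n r : ℕ)
    (X : Fin p → EuclideanSpace ℝ (Fin n))
    (Xbar : EuclideanSpace ℝ (Fin n)) (hXbar : Xbar = (p : ℝ)⁻¹ • ∑ k, X k)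
    (Xt : Fin p → EuclideanSpace ℝ (Fin n)) (hXt : ∀ k, Xt k = X k - Xbar)
    (lam : Fin n → ℝ) (v : Fin n → EuclideanSpace ℝ (Fin n))
    (hortho : Orthonormal ℝ v)
    (heig : ∀ i j, ∑ l, (∑ k, Xt k j * Xt k l) * v i l = lam i * v i j)
    (hmono : ∀ i j : Fin n, i ≤ j → lam j ≤ lam i) :
    (∀ (a : EuclideanSpace ℝ (Fin n)) (L : Submodule ℝ (EuclideanSpace ℝ (Fin n))),
        Module.finrank ℝ L = r →
          ∑ i ∈ Finset.univ.filter (fun i : Fin n => r ≤ (i : ℕ)), lam i ≤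
            ∑ k, (Metric.infDist (X k) (a +ᵥ (L : Set (EuclideanSpace ℝ (Fin n))))) ^ 2) ∧
    (∀ (a : EuclideanSpace ℝ (Fin n)) (L : Submodule ℝ (EuclideanSpace ℝ (Fin n))),
        Module.finrank ℝ L = r →
          ∑ k, (Metric.infDist (X k)
              (Xbar +ᵥ (Submodule.span ℝ (v '' {i : Fin n | (i : ℕ) < r}) :
                Set (EuclideanSpace ℝ (Fin n))))) ^ 2 ≤
            ∑ k, (Metric.infDist (X k) (a +ᵥ (L : Set (EuclideanSpace ℝ (Fin n))))) ^ 2) := by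
  have hcentred : ∑ k, (X k - Xbar) = 0 := by
    simpa [hXbar] using sum_sub_inv_card_smul_sum (K := ℝ) X
  obtain rfl : Xt = fun k => X k - Xbar := funext hXt
  let b := OrthonormalBasis.mk hortho
    (hortho.linearIndependent.span_eq_top_of_card_eq_finrank' (by simp)).ge
  have hb : ⇑b = v := OrthonormalBasis.coe_mk _ _
  have hW : ∀ i u, ∑ k, ⟪X k - Xbar, b i⟫ * ⟪X k - Xbar, u⟫ = lam i * ⟪b i, u⟫ :=
    hb ▸ fun i => sum_inner_mul_inner_of_sum_mul_eq _ _ _ (heig i)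
  obtain ⟨c, hs, hsc⟩ := exists_threshold_of_antitone (show Antitone lam from hmono) r
  have hlower : ∀ (a : EuclideanSpace ℝ (Fin n)) (L : Submodule ℝ (EuclideanSpace ℝ (Fin n))),
      Module.finrank ℝ L = r → ∑ i ∈ univ.filter (fun i : Fin n => r ≤ (i : ℕ)), lam i ≤
        ∑ k, infDist (X k) (a +ᵥ (L : Set (EuclideanSpace ℝ (Fin n)))) ^ 2 := by
    intro a L hL
    refine sum_le_sum_infDist_sq b X Xbar hcentred lam hW _ c (fun i hi => hs i (mem_filter.1 hi).2)
      (fun i hi => hsc i (by simpa using hi)) L ?_ a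
    have := L.finrank_add_finrank_orthogonal
    rw [finrank_euclideanSpace_fin] at this
    rw [Fin.card_filter_le_val]
    omega
  exact ⟨hlower, fun a L hL =>
    (hb ▸ sum_infDist_sq_le_sum b X Xbar lam hW _ (by simp)).trans (hlower a L hL)⟩

theorem principal_subspace_minimizes_sum_sq_dist (p n r : ℕ) (hp : 1 ≤ p) (hr : r ≤ n)
    (X : Fin p → EuclideanSpace ℝ (Fin n))
    (Xbar : EuclideanSpace ℝ (Fin n)) (hXbar : Xbar = (p : ℝ)⁻¹ • ∑ k, X k)
    (Xt : Fin p → EuclideanSpace ℝ (Fin n)) (hXt : ∀ k, Xt k = X k - Xbar)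
    (lam : Fin n → ℝ) (v : Fin n → EuclideanSpace ℝ (Fin n))
    (hortho : Orthonormal ℝ v)
    (heig : ∀ i j, ∑ l, (∑ k, Xt k j * Xt k l) * v i l = lam i * v i j)
    (hmono : ∀ i j : Fin n, i ≤ j → lam j ≤ lam i) :
    (∀ (a : EuclideanSpace ℝ (Fin n)) (L : Submodule ℝ (EuclideanSpace ℝ (Fin n))),
        Module.finrank ℝ L = r →
          ∑ i ∈ Finset.univ.filter (fun i : Fin n => r ≤ (i : ℕ)), lam i ≤
            ∑ k, (Metric.infDist (X k) (a +ᵥ (L : Set (EuclideanSpace ℝ (Fin n))))) ^ 2) ∧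
    (∀ (a : EuclideanSpace ℝ (Fin n)) (L : Submodule ℝ (EuclideanSpace ℝ (Fin n))),
        Module.finrank ℝ L = r →
          ∑ k, (Metric.infDist (X k)
              (Xbar +ᵥ (Submodule.span ℝ (v '' {i : Fin n | (i : ℕ) < r}) :
                Set (EuclideanSpace ℝ (Fin n))))) ^ 2 ≤
            ∑ k, (Metric.infDist (X k) (a +ᵥ (L : Set (EuclideanSpace ℝ (Fin n))))) ^ 2) :=
  principal_subspace_minimizes_sum_sq_dist_general p n r X Xbar hXbar Xt hXt lam v hortho heig hmono
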